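/- arXiv:1109.4623 — 2 statements merged into one kernel-verified Lean document; each statement's English description precedes it below -/
import Mathlib

section
/- (Semi-monotonicity of normal default theories.) Let Δ=(D,W) and Δ'=(D',W) be normal propositional default theories with D ⊆ D'. Then for every extension E of Δ there exists an extension E' of Δ' such that E ⊆ E'. -/
/-! Propositional formulas -/

inductive Form (V : Type) : Type
  | atom : V → Form V
  | tru  : Form V
  | fals : Form V
  | neg  : Form V → Form V
  | conj : Form V → Form V → Form V
  | disj : Form V → Form V → Form V

/-- Satisfaction of a formula by a valuation. -/
def Form.sat {V : Type} (v : V → Prop) : Form V → Prop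
  | .atom a => v a
  | .tru => True
  | .fals => False
  | .neg φ => ¬ Form.sat v φ
  | .conj φ ψ => Form.sat v φ ∧ Form.sat v ψ
  | .disj φ ψ => Form.sat v φ ∨ Form.sat v ψ

/-- Logical logClosure `T*` of a set of formulas. -/
def logClosure {V : Type} (T : Set (Form V)) : Set (Form V) :=
  { φ | ∀ v : V → Prop, (∀ ψ ∈ T, Form.sat v ψ) → Form.sat v φ }

/-- A default rule `α : β₁,…,β_m / γ` (`pre = none` means the prerequisite is missing). -/
structure Default (V : Type) : Type where
  pre   : Option (Form V)
  justs : List (Form V)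
  concl : Form V

/-- The stage sets `E_i` relative to a candidate extension `E`:
`E_0 = W`, `E_{i+1} = E_i* ∪ {γ | α:β₁,…,β_m/γ ∈ D, α ∈ E_i, ¬β₁ ∉ E, …, ¬β_m ∉ E}`. -/
def extStage {V : Type} (D : Set (Default V)) (W : Set (Form V)) (E : Set (Form V)) :
    ℕ → Set (Form V)
  | 0 => W
  | i + 1 =>
      logClosure (extStage D W E i) ∪
        { φ | ∃ d ∈ D, d.concl = φ ∧ (∀ a ∈ d.pre, a ∈ extStage D W E i) ∧
              ∀ b ∈ d.justs, Form.neg b ∉ E }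

/-- `E` is an extension of the default theory `(D, W)`. -/
def IsExtension {V : Type} (D : Set (Default V)) (W : Set (Form V)) (E : Set (Form V)) : Prop :=
  E = ⋃ i, extStage D W E i

/-- `(D, W) ⊨ φ`: every extension of `(D, W)` contains `φ`. -/
def entails {V : Type} (D : Set (Default V)) (W : Set (Form V)) (φ : Form V) : Prop :=
  ∀ E, IsExtension D W E → φ ∈ E

/-! Literals -/

/-- A literal: a letter together with a sign (`pos = true` means a positive literal). -/
structure Lit (V : Type) : Type where
  letter : V
  pos : Bool

/-- The formula corresponding to a literal. -/
def Lit.toForm {V : Type} (l : Lit V) : Form V :=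
  if l.pos then Form.atom l.letter else Form.neg (Form.atom l.letter)

/-- Negation of a literal (so that `¬¬a = a`). -/
def Lit.negate {V : Type} (l : Lit V) : Lit V := ⟨l.letter, !l.pos⟩

/-- A set of literals is consistent if it contains no complementary pair. -/
def LitConsistent {V : Type} (S : Set (Lit V)) : Prop := ∀ l ∈ S, l.negate ∉ S

/-! Normal mixed unary (NMU) default theories -/

/-- An NMU default `α : β / β` with `α` empty or a single literal and `β` a single literal. -/
structure NMUDefault (V : Type) : Type where
  pre : Option (Lit V)
  concl : Lit V

/-- The general default rule corresponding to an NMU default. -/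
def NMUDefault.toDefault {V : Type} (d : NMUDefault V) : Default V :=
  ⟨d.pre.map Lit.toForm, [d.concl.toForm], d.concl.toForm⟩

/-- `E` is an extension of the NMU theory `(D, W)`. -/
def NMU.IsExtension {V : Type} (D : Set (NMUDefault V)) (W : Set (Lit V))
    (E : Set (Form V)) : Prop :=
  _root_.IsExtension (NMUDefault.toDefault '' D) (Lit.toForm '' W) E

/-- The NMU theory `(D, W)` entails the literal `l`. -/
def NMU.entails {V : Type} (D : Set (NMUDefault V)) (W : Set (Lit V)) (l : Lit V) : Prop :=
  _root_.entails (NMUDefault.toDefault '' D) (Lit.toForm '' W) l.toForm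

/-- An NMU theory is normal unary (NU) if every nonempty prerequisite is positive. -/
def IsNU {V : Type} (D : Set (NMUDefault V)) : Prop :=
  ∀ d ∈ D, ∀ p ∈ d.pre, p.pos = true

/-! Atomic dependency graph -/

/-- Edge `(x, y)` of the atomic dependency graph: `x` occurs in the prerequisite and `y`
in the consequent of some default of `D`. -/
def depEdge {V : Type} (D : Set (NMUDefault V)) (x y : V) : Prop :=
  ∃ d ∈ D, (∃ p ∈ d.pre, p.letter = x) ∧ d.concl.letter = y

/-- There is a path from `x` to `y` in the atomic dependency graph. -/
def depReach {V : Type} (D : Set (NMUDefault V)) : V → V → Prop :=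
  Relation.ReflTransGen (depEdge D)

/-- A set of literals `S` influences a literal `l`. -/
def influences {V : Type} (D : Set (NMUDefault V)) (S : Set (Lit V)) (l : Lit V) : Prop :=
  ∃ t ∈ S, depReach D t.letter l.letter

/-- A default rule is normal if its consequent is identical to its single justification. -/
def Default.IsNormal {V : Type} (d : Default V) : Prop := d.justs = [d.concl]

/-! Starting from `E`, keep adding the conclusion of some default of `D'` whose prerequisite is
derived and whose conclusion is consistent with what we have, closing logically after each step.
As `D'` is finite this stops at a closed consistent `F ⊇ E` in which every default of `D'` with
derived prerequisite is either applied or blocked by the negation of its conclusion, so the stages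
of `(D', W)` relative to `F` stay inside `F`. Conversely every formula of `F` is derived in those
stages: normality means a default whose conclusion lies in a consistent set `G` is never blocked
by `G`, so each derivation stays valid when checked against the final `F`. If `W` is
inconsistent, the set of all formulas is an extension. -/

section

variable {V : Type}

def Satisfiable (T : Set (Form V)) : Prop := ∃ v : V → Prop, ∀ ψ ∈ T, Form.sat v ψ

section logClosure

variable {S T : Set (Form V)}

lemma subset_logClosure (T : Set (Form V)) : T ⊆ logClosure T :=
  fun φ hφ _ hv => hv φ hφ

lemma logClosure_mono (h : S ⊆ T) : logClosure S ⊆ logClosure T :=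
  fun _ hφ v hv => hφ v fun ψ hψ => hv ψ (h hψ)

lemma logClosure_logClosure (T : Set (Form V)) : logClosure (logClosure T) = logClosure T :=
  (subset_logClosure _).antisymm' fun _ hφ v hv => hφ v fun _ hψ => hψ v hv

lemma satisfiable_logClosure : Satisfiable T → Satisfiable (logClosure T) :=
  fun ⟨v, hv⟩ => ⟨v, fun _ hψ => hψ v hv⟩

lemma Satisfiable.neg_notMem (h : Satisfiable T) {φ : Form V} (hφ : φ ∈ T) :
    Form.neg φ ∉ T :=
  fun hneg => h.elim fun _ hv => hv _ hneg (hv φ hφ)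

lemma Satisfiable.fals_notMem_logClosure (h : Satisfiable T) : Form.fals ∉ logClosure T :=
  fun hfals => h.elim fun v hv => hfals v hv

lemma mem_logClosure_of_not_satisfiable (h : ¬ Satisfiable T) (φ : Form V) :
    φ ∈ logClosure T :=
  fun v hv => absurd ⟨v, hv⟩ h

lemma neg_mem_logClosure_of_not_satisfiable_insert {φ : Form V}
    (h : ¬ Satisfiable (insert φ T)) : Form.neg φ ∈ logClosure T :=
  fun v hv hφ => h ⟨v, Set.forall_mem_insert.2 ⟨hφ, hv⟩⟩

end logClosure

lemma Default.IsNormal.concl_mem_justs {d : Default V} (h : d.IsNormal) : d.concl ∈ d.justs :=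
  h ▸ List.mem_singleton_self _

lemma Default.IsNormal.forall_mem_justs_iff {d : Default V} (h : d.IsNormal)
    {P : Form V → Prop} : (∀ b ∈ d.justs, P b) ↔ P d.concl := by
  rw [show d.justs = [d.concl] from h, List.forall_mem_singleton]

section extStage

variable {D D' : Set (Default V)} {W E G : Set (Form V)}

lemma extStage_monotone (D : Set (Default V)) (W E : Set (Form V)) :
    Monotone (extStage D W E) := by
  refine monotone_nat_of_le_succ fun i => ?_
  induction i with
  | zero => exact fun φ hφ => Or.inl (subset_logClosure W hφ)
  | succ i ih =>
    rintro φ (hφ | ⟨d, hd, rfl, hpre, hjust⟩)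
    · exact Or.inl (logClosure_mono ih hφ)
    · exact Or.inr ⟨d, hd, rfl, fun a ha => ih (hpre a ha), hjust⟩

lemma IsExtension.extStage_subset (hE : IsExtension D W E) (i : ℕ) : extStage D W E i ⊆ E :=
  (Set.subset_iUnion (extStage D W E) i).trans hE.symm.subset

lemma extStage_subset_logClosure_of_blocked (h : ∀ d ∈ D, ∃ b ∈ d.justs, Form.neg b ∈ E) :
    ∀ i, extStage D W E i ⊆ logClosure W
  | 0 => subset_logClosure W
  | i + 1 => by
    rintro φ (hφ | ⟨d, hd, rfl, -, hjust⟩)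
    · exact logClosure_logClosure W ▸
        logClosure_mono (extStage_subset_logClosure_of_blocked h i) hφ
    · obtain ⟨b, hb, hneg⟩ := h d hd
      exact absurd hneg (hjust b hb)

lemma IsExtension.exists_eq_extStage (hE : IsExtension D W E) (hD : D.Finite) :
    ∃ N, E = extStage D W E N := by
  set C := E ∩ Default.concl '' D
  have hC : C.Finite := (hD.image _).subset Set.inter_subset_right
  obtain ⟨N, hCN⟩ : ∃ N, C ⊆ extStage D W E N := by
    simpa using (extStage_monotone D W E).directed_le.exists_mem_subset_of_finset_subset_biUnion
      (s := hC.toFinset) (by simpa using Set.inter_subset_left.trans hE.subset)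
  have hstage : ∀ i, extStage D W E i ⊆ logClosure (W ∪ C) := by
    intro i
    induction i with
    | zero => exact Set.subset_union_left.trans (subset_logClosure _)
    | succ i ih =>
      rintro φ (hφ | ⟨d, hd, rfl, hpre, hjust⟩)
      · exact logClosure_logClosure (W ∪ C) ▸ logClosure_mono ih hφ
      · exact subset_logClosure _ <| Or.inr
          ⟨hE.extStage_subset (i + 1) (Or.inr ⟨d, hd, rfl, hpre, hjust⟩), d, hd, rfl⟩
  have hWC : W ∪ C ⊆ extStage D W E N :=
    Set.union_subset (extStage_monotone D W E N.zero_le) hCN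
  refine ⟨N + 1, (hE.extStage_subset _).antisymm' ?_⟩
  exact hE.subset.trans <| Set.iUnion_subset fun i =>
    (hstage i).trans fun φ hφ => Or.inl (logClosure_mono hWC hφ)

lemma IsExtension.logClosure_eq (hE : IsExtension D W E) (hD : D.Finite) :
    logClosure E = E := by
  obtain ⟨N, hN⟩ := hE.exists_eq_extStage hD
  refine (subset_logClosure E).antisymm' ?_
  calc logClosure E = logClosure (extStage D W E N) := congrArg logClosure hN
    _ ⊆ E := fun φ hφ => hE.extStage_subset (N + 1) (Or.inl hφ)

lemma IsExtension.satisfiable (hE : IsExtension D W E) (hD : D.Finite)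
    (hnorm : ∀ d ∈ D, d.IsNormal) (hW : Satisfiable W) : Satisfiable E := by
  by_contra hunsat
  have hall : ∀ φ, φ ∈ E := fun φ =>
    hE.logClosure_eq hD ▸ mem_logClosure_of_not_satisfiable hunsat φ
  have hblocked : ∀ d ∈ D, ∃ b ∈ d.justs, Form.neg b ∈ E :=
    fun d hd => ⟨d.concl, (hnorm d hd).concl_mem_justs, hall _⟩
  obtain ⟨i, hi⟩ := Set.mem_iUnion.1 (hE.subset (hall Form.fals))
  exact hW.fals_notMem_logClosure (extStage_subset_logClosure_of_blocked hblocked i hi)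

lemma isExtension_univ_of_not_satisfiable (hW : ¬ Satisfiable W) (D : Set (Default V)) :
    IsExtension D W Set.univ := by
  refine (Set.eq_univ_of_forall fun φ => ?_).symm
  exact Set.mem_iUnion.2 ⟨1, Or.inl (mem_logClosure_of_not_satisfiable hW φ)⟩

lemma extStage_subset_extStage_of_normal (hDD' : D ⊆ D') (hnorm : ∀ d ∈ D, d.IsNormal)
    (hG : Satisfiable G) (hEG : ∀ i, extStage D W E i ⊆ G) (i : ℕ) :
    extStage D W E i ⊆ extStage D' W G i := by
  induction i with
  | zero => exact subset_rfl
  | succ i ih =>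
    rintro φ (hφ | ⟨d, hd, rfl, hpre, hjust⟩)
    · exact Or.inl (logClosure_mono ih hφ)
    · refine Or.inr ⟨d, hDD' hd, rfl, fun a ha => ih (hpre a ha), ?_⟩
      exact (hnorm d hd).forall_mem_justs_iff.2 <|
        hG.neg_notMem (hEG (i + 1) (Or.inr ⟨d, hd, rfl, hpre, hjust⟩))

lemma isExtension_of_closed_under_defaults {F : Set (Form V)} (hW : W ⊆ F)
    (hF : logClosure F = F) (hground : F ⊆ ⋃ i, extStage D W F i)
    (hclosed : ∀ d ∈ D, (∀ a ∈ d.pre, a ∈ F) → (∀ b ∈ d.justs, Form.neg b ∉ F) → d.concl ∈ F) :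
    IsExtension D W F := by
  have hstage : ∀ i, extStage D W F i ⊆ F := by
    intro i
    induction i with
    | zero => exact hW
    | succ i ih =>
      rintro φ (hφ | ⟨d, hd, rfl, hpre, hjust⟩)
      · exact hF ▸ logClosure_mono ih hφ
      · exact hclosed d hd (fun a ha => ih (hpre a ha)) hjust
  exact hground.antisymm (Set.iUnion_subset hstage)

end extStage

/-- Quantifying over every consistent `G ⊇ F` makes this stable under enlarging `F`:
the normal defaults used to derive `F` have their conclusions in `F`, so `G` cannot block them. -/
def Grounded (D : Set (Default V)) (W F : Set (Form V)) : Prop :=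
  ∀ G, F ⊆ G → Satisfiable G → ∃ k, F ⊆ extStage D W G k

section Grounded

variable {D D' : Set (Default V)} {W E F : Set (Form V)}

lemma IsExtension.grounded (hE : IsExtension D W E) (hD : D.Finite) (hDD' : D ⊆ D')
    (hnorm : ∀ d ∈ D, d.IsNormal) : Grounded D' W E := fun _ hEG hG =>
  let ⟨N, hN⟩ := hE.exists_eq_extStage hD
  ⟨N, hN.subset.trans <| extStage_subset_extStage_of_normal hDD' hnorm hG
    (fun i => (hE.extStage_subset i).trans hEG) N⟩

lemma Grounded.logClosure_insert (hF : Grounded D W F) {d : Default V} (hd : d ∈ D)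
    (hnorm : d.IsNormal) (hpre : ∀ a ∈ d.pre, a ∈ F) :
    Grounded D W (logClosure (insert d.concl F)) := by
  intro G hG hGsat
  have hinsG : insert d.concl F ⊆ G := (subset_logClosure _).trans hG
  obtain ⟨k, hk⟩ := hF G ((Set.subset_insert _ _).trans hinsG) hGsat
  have hconcl : d.concl ∈ extStage D W G (k + 1) :=
    Or.inr ⟨d, hd, rfl, fun a ha => hk (hpre a ha),
      hnorm.forall_mem_justs_iff.2 <| hGsat.neg_notMem (hinsG (Set.mem_insert _ _))⟩
  have hins : insert d.concl F ⊆ extStage D W G (k + 1) :=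
    Set.insert_subset hconcl (hk.trans (extStage_monotone D W G k.le_succ))
  exact ⟨k + 2, fun φ hφ => Or.inl (logClosure_mono hins hφ)⟩

lemma exists_maximal_grounded_superset (hD : D.Finite) (hnorm : ∀ d ∈ D, d.IsNormal)
    (hEcl : logClosure E = E) (hEsat : Satisfiable E) (hEg : Grounded D W E) :
    ∃ F, E ⊆ F ∧ logClosure F = F ∧ Satisfiable F ∧ Grounded D W F ∧
      ∀ d ∈ D, (∀ a ∈ d.pre, a ∈ F) → Form.neg d.concl ∉ F → d.concl ∈ F := by
  let 𝓕 := {F | E ⊆ F ∧ logClosure F = F ∧ Satisfiable F ∧ Grounded D W F}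
  let applied (F : Set (Form V)) := {d ∈ D | d.concl ∈ F}
  obtain ⟨F, ⟨hEF, hF, hFsat, hFg⟩, hmax⟩ := Set.Finite.exists_maximalFor' applied 𝓕
    (hD.finite_subsets.subset (by rintro _ ⟨F, -, rfl⟩; exact Set.sep_subset _ _))
    ⟨E, subset_rfl, hEcl, hEsat, hEg⟩
  refine ⟨F, hEF, hF, hFsat, hFg, fun d hd hpre hneg => by_contra fun hdF => ?_⟩
  have hins : Satisfiable (insert d.concl F) := by_contra fun h =>
    hneg (hF ▸ neg_mem_logClosure_of_not_satisfiable_insert h)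
  have hFF' : F ⊆ logClosure (insert d.concl F) :=
    (Set.subset_insert _ _).trans (subset_logClosure _)
  have hF' : logClosure (insert d.concl F) ∈ 𝓕 :=
    ⟨hEF.trans hFF', logClosure_logClosure _, satisfiable_logClosure hins,
      hFg.logClosure_insert hd (hnorm d hd) hpre⟩
  exact hdF (hmax hF' (fun e he => ⟨he.1, hFF' he.2⟩)
    ⟨hd, subset_logClosure _ (Set.mem_insert _ _)⟩).2

end Grounded

lemma IsExtension.exists_isExtension_superset {D D' : Set (Default V)} {W E : Set (Form V)}
    (hE : IsExtension D W E) (hD' : D'.Finite) (hDD' : D ⊆ D')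
    (hnorm : ∀ d ∈ D', d.IsNormal) (hW : Satisfiable W) :
    ∃ E', IsExtension D' W E' ∧ E ⊆ E' := by
  have hD := hD'.subset hDD'
  have hnormD : ∀ d ∈ D, d.IsNormal := fun d hd => hnorm d (hDD' hd)
  obtain ⟨F, hEF, hF, hFsat, hFg, hmax⟩ := exists_maximal_grounded_superset hD' hnorm
    (hE.logClosure_eq hD) (hE.satisfiable hD hnormD hW) (hE.grounded hD hDD' hnormD)
  obtain ⟨k, hk⟩ := hFg F subset_rfl hFsat
  refine ⟨F, isExtension_of_closed_under_defaults ((hE.extStage_subset 0).trans hEF) hF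
    (hk.trans (Set.subset_iUnion _ k)) fun d hd hpre hjust => ?_, hEF⟩
  exact hmax d hd hpre (hjust _ (hnorm d hd).concl_mem_justs)

end

theorem semi_monotonicity_general {V : Type} (D D' : Set (Default V)) (W : Set (Form V))
    (hD' : D'.Finite) (hsub : D ⊆ D')
    (hnorm : ∀ d ∈ D', d.IsNormal)
    (E : Set (Form V)) (hE : IsExtension D W E) :
    ∃ E', IsExtension D' W E' ∧ E ⊆ E' := by
  by_cases hW : Satisfiable W
  · exact hE.exists_isExtension_superset hD' hsub hnorm hW
  · exact ⟨Set.univ, isExtension_univ_of_not_satisfiable hW D', Set.subset_univ E⟩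

/-- Semi-monotonicity of normal default theories: if `D ⊆ D'` and both theories are normal,
then every extension of `(D, W)` is contained in some extension of `(D', W)`. -/
theorem semi_monotonicity {V : Type} (D D' : Set (Default V)) (W : Set (Form V))
    (hD' : D'.Finite) (hW : W.Finite) (hsub : D ⊆ D')
    (hnorm : ∀ d ∈ D', d.IsNormal)
    (E : Set (Form V)) (hE : IsExtension D W E) :
    ∃ E', IsExtension D' W E' ∧ E ⊆ E' :=
  semi_monotonicity_general D D' W hD' hsub hnorm E hE
end

section
/- Let Δ=(D,W) be an NU default theory and let Δ̄=(D̄,W̄) be the dual theory obtained from Δ by replacing each literal ℓ occurring in Δ (in W and in the prerequisites, justifications and consequents of defaults in D) with ¬ℓ. Then Δ̄ is a DNU default theory, and for every L ⊆ W and S ⊆ W_L: S is an outlier witness set for L in Δ if and only if ¬S is an outlier witness set for ¬L in Δ̄. -/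
/-- `S` is an outlier witness set for `L` in the NMU theory `(D, W)`. -/
def NMUWitness {V : Type} (D : Set (NMUDefault V)) (W L S : Set (Lit V)) : Prop :=
  S.Nonempty ∧ S ⊆ W \ L ∧
  (∀ l ∈ S, NMU.entails D (W \ S) l.negate) ∧
  ¬ (∀ l ∈ S, NMU.entails D (W \ (S ∪ L)) l.negate)

/-- `S` is a strong outlier witness set for `L` in the NMU theory `(D, W)`. -/
def NMUStrongWitness {V : Type} (D : Set (NMUDefault V)) (W L S : Set (Lit V)) : Prop :=
  S.Nonempty ∧ S ⊆ W \ L ∧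
  (∀ l ∈ S, NMU.entails D (W \ S) l.negate) ∧
  (∀ l ∈ S, ¬ NMU.entails D (W \ (S ∪ L)) l.negate)

/-- The dual of an NMU default: every literal is replaced by its negation. -/
def NMUDefault.dual {V : Type} (d : NMUDefault V) : NMUDefault V :=
  ⟨d.pre.map Lit.negate, d.concl.negate⟩

/-- An NMU theory is dual normal unary (DNU) if every nonempty prerequisite is negative. -/
def IsDNU {V : Type} (D : Set (NMUDefault V)) : Prop :=
  ∀ d ∈ D, ∀ p ∈ d.pre, p.pos = false


section DualAux

variable {V : Type}

lemma Lit.negate_negate (l : Lit V) : l.negate.negate = l := by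
  simp [Lit.negate]

lemma Lit.negate_injective : Function.Injective (Lit.negate : Lit V → Lit V) :=
  Function.LeftInverse.injective Lit.negate_negate

lemma Lit.toForm_injective : Function.Injective (Lit.toForm : Lit V → Form V) := by
  rintro ⟨x, px⟩ ⟨y, py⟩ h
  cases px <;> cases py <;> simp [Lit.toForm] at h <;> simp [h]

lemma sat_negate (v : V → Prop) (l : Lit V) :
    Form.sat (fun a => ¬ v a) l.toForm ↔ Form.sat v l.negate.toForm := by
  rcases l with ⟨x, px⟩
  cases px <;> simp [Lit.toForm, Lit.negate, Form.sat]

lemma closure_transfer {A B : Set (Form V)}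
    (hAB : ∀ v : V → Prop, (∀ ψ ∈ A, Form.sat v ψ) ↔ (∀ ψ ∈ B, Form.sat (fun a => ¬ v a) ψ))
    (φ φ' : Form V) (hφ : ∀ v : V → Prop, Form.sat (fun a => ¬ v a) φ ↔ Form.sat v φ') :
    φ ∈ logClosure A ↔ φ' ∈ logClosure B := by
  have hnn : ∀ v : V → Prop, (fun a => ¬ ¬ v a) = v := fun v => funext fun a => propext not_not
  constructor
  · intro h v hv
    have h1 : ∀ ψ ∈ A, Form.sat (fun a => ¬ v a) ψ := by
      refine (hAB (fun a => ¬ v a)).mpr ?_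
      rw [hnn]; exact hv
    exact (hφ v).mp (h _ h1)
  · intro h v hv
    have h1 := (hAB v).mp hv
    have h2 := h _ h1
    have h3 := (hφ (fun a => ¬ v a)).mpr h2
    rwa [hnn] at h3

lemma extStage_congr (D' : Set (Default V)) (W' E₁ E₂ : Set (Form V))
    (h : ∀ d ∈ D', ∀ b ∈ d.justs, (Form.neg b ∈ E₁ ↔ Form.neg b ∈ E₂)) (i : ℕ) :
    extStage D' W' E₁ i = extStage D' W' E₂ i := by
  induction i with
  | zero => rfl
  | succ i ih =>
      show logClosure _ ∪ _ = logClosure _ ∪ _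
      rw [ih]
      congr 1
      ext φ
      simp only [Set.mem_setOf_eq]
      constructor
      · rintro ⟨d, hd, h1, h2, h3⟩
        exact ⟨d, hd, h1, h2, fun b hb hmem => h3 b hb ((h d hd b hb).mpr hmem)⟩
      · rintro ⟨d, hd, h1, h2, h3⟩
        exact ⟨d, hd, h1, h2, fun b hb hmem => h3 b hb ((h d hd b hb).mp hmem)⟩

lemma mem_iUnion_stage_iff (D' : Set (Default V)) (W' O : Set (Form V)) (φ : Form V) :
    (φ ∈ ⋃ i, extStage D' W' O i) ↔ ∃ i, φ ∈ logClosure (extStage D' W' O i) := by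
  simp only [Set.mem_iUnion]
  constructor
  · rintro ⟨i, hi⟩
    exact ⟨i, fun v hv => hv φ hi⟩
  · rintro ⟨i, hi⟩
    exact ⟨i + 1, Set.mem_union_left _ hi⟩

lemma mem_stage_succ (D : Set (NMUDefault V)) (W' O : Set (Form V)) (i : ℕ) (φ : Form V) :
    φ ∈ extStage (NMUDefault.toDefault '' D) W' O (i + 1) ↔
      φ ∈ logClosure (extStage (NMUDefault.toDefault '' D) W' O i) ∨
        ∃ d ∈ D, d.concl.toForm = φ ∧
          (∀ p ∈ d.pre, p.toForm ∈ extStage (NMUDefault.toDefault '' D) W' O i) ∧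
          Form.neg d.concl.toForm ∉ O := by
  show φ ∈ logClosure _ ∪ _ ↔ _
  rw [Set.mem_union]
  apply or_congr Iff.rfl
  simp only [Set.mem_setOf_eq]
  constructor
  · rintro ⟨d', ⟨d, hd, rfl⟩, rfl, h2, h3⟩
    refine ⟨d, hd, rfl, ?_, ?_⟩
    · intro p hp
      apply h2
      simp [NMUDefault.toDefault]
      exact ⟨p, hp, rfl⟩
    · apply h3
      simp [NMUDefault.toDefault]
  · rintro ⟨d, hd, rfl, h2, h3⟩
    refine ⟨NMUDefault.toDefault d, ⟨d, hd, rfl⟩, rfl, ?_, ?_⟩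
    · intro a ha
      simp [NMUDefault.toDefault] at ha
      obtain ⟨p, hp, rfl⟩ := ha
      exact h2 p hp
    · intro b hb
      simp [NMUDefault.toDefault] at hb
      subst hb
      exact h3

lemma mem_dual_stage_succ (D : Set (NMUDefault V)) (W' O : Set (Form V)) (i : ℕ) (φ : Form V) :
    φ ∈ extStage (NMUDefault.toDefault '' (NMUDefault.dual '' D)) W' O (i + 1) ↔
      φ ∈ logClosure (extStage (NMUDefault.toDefault '' (NMUDefault.dual '' D)) W' O i) ∨
        ∃ d ∈ D, d.concl.negate.toForm = φ ∧
          (∀ p ∈ d.pre, p.negate.toForm ∈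
            extStage (NMUDefault.toDefault '' (NMUDefault.dual '' D)) W' O i) ∧
          Form.neg d.concl.negate.toForm ∉ O := by
  rw [mem_stage_succ]
  apply or_congr Iff.rfl
  constructor
  · rintro ⟨d', ⟨d, hd, rfl⟩, h1, h2, h3⟩
    refine ⟨d, hd, h1, ?_, h3⟩
    intro p hp
    apply h2
    simp [NMUDefault.dual]
    exact ⟨p, hp, rfl⟩
  · rintro ⟨d, hd, h1, h2, h3⟩
    refine ⟨NMUDefault.dual d, ⟨d, hd, rfl⟩, h1, ?_, h3⟩
    intro q hq
    simp [NMUDefault.dual] at hq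
    obtain ⟨p, hp, rfl⟩ := hq
    exact h2 p hp

lemma dual_ext (D : Set (NMUDefault V)) (W : Set (Lit V)) (Ebar : Set (Form V))
    (hE : NMU.IsExtension (NMUDefault.dual '' D) (Lit.negate '' W) Ebar) :
    ∃ E, NMU.IsExtension D W E ∧ ∀ l : Lit V, (l.toForm ∈ E ↔ l.negate.toForm ∈ Ebar) := by
  classical
  set X : Set (Form V) :=
    {φ | ∃ c : Lit V, φ = Form.neg c.toForm ∧ Form.neg c.negate.toForm ∈ Ebar} with hXdef
  set S : ℕ → Set (Form V) :=
    extStage (NMUDefault.toDefault '' D) (Lit.toForm '' W) X with hSdef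
  set T : ℕ → Set (Form V) :=
    extStage (NMUDefault.toDefault '' (NMUDefault.dual '' D))
      (Lit.toForm '' (Lit.negate '' W)) Ebar with hTdef
  have hEbar : Ebar = ⋃ i, T i := hE
  have hXmem : ∀ c : Lit V, (Form.neg c.toForm ∈ X ↔ Form.neg c.negate.toForm ∈ Ebar) := by
    intro c
    constructor
    · rintro ⟨c', hc', h⟩
      have hcc : c.toForm = c'.toForm := by injection hc'
      rwa [Lit.toForm_injective hcc]
    · intro h
      exact ⟨c, rfl, h⟩
  have hnegsat : ∀ (c : Lit V) (v : V → Prop),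
      Form.sat (fun a => ¬ v a) (Form.neg c.toForm) ↔ Form.sat v (Form.neg c.negate.toForm) := by
    intro c v
    show ¬ _ ↔ ¬ _
    exact not_congr (sat_negate v c)
  have hposnsat : ∀ (l : Lit V) (v : V → Prop),
      Form.sat (fun a => ¬ v a) l.toForm ↔ Form.sat v l.negate.toForm := fun l v => sat_negate v l
  have inv : ∀ i : ℕ,
      (∀ v : V → Prop, (∀ ψ ∈ S i, Form.sat v ψ) ↔ (∀ ψ ∈ T i, Form.sat (fun a => ¬ v a) ψ)) ∧
      (∀ l : Lit V, (l.toForm ∈ S i ↔ l.negate.toForm ∈ T i)) := by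
    intro i
    induction i with
    | zero =>
        constructor
        · intro v
          constructor
          · rintro h ψ ⟨l', ⟨l, hl, rfl⟩, rfl⟩
            have := h l.toForm ⟨l, hl, rfl⟩
            exact ((sat_negate v l.negate).trans (by rw [Lit.negate_negate])).mpr this
          · rintro h ψ ⟨l, hl, rfl⟩
            have := h (Lit.negate l).toForm ⟨l.negate, ⟨l, hl, rfl⟩, rfl⟩
            exact ((sat_negate v l.negate).trans (by rw [Lit.negate_negate])).mp this
        · intro l
          show l.toForm ∈ Lit.toForm '' W ↔ l.negate.toForm ∈ Lit.toForm '' (Lit.negate '' W)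
          rw [Lit.toForm_injective.mem_set_image, Lit.toForm_injective.mem_set_image,
            Lit.negate_injective.mem_set_image]
    | succ i ih =>
        have app : ∀ d ∈ D,
            (((∀ p ∈ d.pre, p.toForm ∈ S i) ∧ Form.neg d.concl.toForm ∉ X) ↔
             ((∀ p ∈ d.pre, p.negate.toForm ∈ T i) ∧ Form.neg d.concl.negate.toForm ∉ Ebar)) := by
          intro d hd
          apply and_congr
          · exact forall₂_congr fun p _ => ih.2 p
          · exact not_congr (hXmem d.concl)
        constructor
        · intro v
          have hmS : (∀ ψ ∈ S (i + 1), Form.sat v ψ) ↔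
              ((∀ ψ ∈ S i, Form.sat v ψ) ∧
                ∀ d ∈ D, ((∀ p ∈ d.pre, p.toForm ∈ S i) ∧ Form.neg d.concl.toForm ∉ X) →
                  Form.sat v d.concl.toForm) := by
            constructor
            · intro h
              refine ⟨fun ψ hψ => h ψ ((mem_stage_succ D _ X i ψ).mpr
                  (Or.inl (fun w hw => hw ψ hψ))), fun d hd hcond => ?_⟩
              exact h _ ((mem_stage_succ D _ X i _).mpr (Or.inr ⟨d, hd, rfl, hcond.1, hcond.2⟩))
            · rintro ⟨h1, h2⟩ ψ hψ
              rcases (mem_stage_succ D _ X i ψ).mp hψ with hc | ⟨d, hd, rfl, hp, hj⟩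
              · exact hc v h1
              · exact h2 d hd ⟨hp, hj⟩
          have hmT : ∀ w : V → Prop, (∀ ψ ∈ T (i + 1), Form.sat w ψ) ↔
              ((∀ ψ ∈ T i, Form.sat w ψ) ∧
                ∀ d ∈ D, ((∀ p ∈ d.pre, p.negate.toForm ∈ T i) ∧
                    Form.neg d.concl.negate.toForm ∉ Ebar) →
                  Form.sat w d.concl.negate.toForm) := by
            intro w
            constructor
            · intro h
              refine ⟨fun ψ hψ => h ψ ((mem_dual_stage_succ D _ Ebar i ψ).mpr
                  (Or.inl (fun u hu => hu ψ hψ))), fun d hd hcond => ?_⟩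
              exact h _ ((mem_dual_stage_succ D _ Ebar i _).mpr
                (Or.inr ⟨d, hd, rfl, hcond.1, hcond.2⟩))
            · rintro ⟨h1, h2⟩ ψ hψ
              rcases (mem_dual_stage_succ D _ Ebar i ψ).mp hψ with hc | ⟨d, hd, rfl, hp, hj⟩
              · exact hc w h1
              · exact h2 d hd ⟨hp, hj⟩
          rw [hmS, hmT (fun a => ¬ v a)]
          apply and_congr (ih.1 v)
          refine forall₂_congr fun d hd => ?_
          rw [app d hd]
          apply imp_congr Iff.rfl
          exact ((sat_negate v d.concl.negate).trans (by rw [Lit.negate_negate])).symm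
        · intro l
          rw [mem_stage_succ, mem_dual_stage_succ]
          apply or_congr
          · exact closure_transfer ih.1 l.toForm l.negate.toForm (hposnsat l)
          · constructor
            · rintro ⟨d, hd, heq, hcond⟩
              refine ⟨d, hd, ?_, (app d hd).mp hcond⟩
              rw [Lit.toForm_injective heq]
            · rintro ⟨d, hd, heq, hcond⟩
              refine ⟨d, hd, ?_, (app d hd).mpr hcond⟩
              have : d.concl.negate = l.negate := Lit.toForm_injective heq
              have : d.concl = l := Lit.negate_injective this
              rw [this]
  refine ⟨⋃ i, S i, ?_, ?_⟩
  · have fix : ∀ d' ∈ NMUDefault.toDefault '' D, ∀ b ∈ d'.justs,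
        (Form.neg b ∈ (⋃ i, S i) ↔ Form.neg b ∈ X) := by
      rintro _ ⟨d, hd, rfl⟩ b hb
      have hbb : b = d.concl.toForm := by
        simpa [NMUDefault.toDefault] using hb
      subst hbb
      rw [hXmem d.concl]
      rw [mem_iUnion_stage_iff]
      constructor
      · rintro ⟨i, hi⟩
        have := (closure_transfer (inv i).1 (Form.neg d.concl.toForm)
          (Form.neg d.concl.negate.toForm) (hnegsat d.concl)).mp hi
        have h2 : Form.neg d.concl.negate.toForm ∈ ⋃ i, T i :=
          (mem_iUnion_stage_iff _ _ _ _).mpr ⟨i, this⟩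
        rwa [hEbar]
      · intro h
        rw [hEbar] at h
        obtain ⟨i, hi⟩ := (mem_iUnion_stage_iff _ _ _ _).mp h
        exact ⟨i, (closure_transfer (inv i).1 (Form.neg d.concl.toForm)
          (Form.neg d.concl.negate.toForm) (hnegsat d.concl)).mpr hi⟩
    show (⋃ i, S i) = ⋃ i, extStage (NMUDefault.toDefault '' D) (Lit.toForm '' W) (⋃ i, S i) i
    have : ∀ i, extStage (NMUDefault.toDefault '' D) (Lit.toForm '' W) (⋃ i, S i) i = S i :=
      fun i => extStage_congr _ _ _ _ fix i
    exact (Set.iUnion_congr this).symm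
  · intro l
    rw [hEbar, Set.mem_iUnion, Set.mem_iUnion]
    exact exists_congr fun i => (inv i).2 l

lemma entails_dual (D : Set (NMUDefault V)) (W : Set (Lit V)) (c : Lit V)
    (h : NMU.entails D W c) :
    NMU.entails (NMUDefault.dual '' D) (Lit.negate '' W) c.negate := by
  intro Ebar hEbar
  obtain ⟨E, hEext, hiff⟩ := dual_ext D W Ebar hEbar
  exact (hiff c).mp (h E hEext)

lemma NMUDefault.dual_dual (d : NMUDefault V) : d.dual.dual = d := by
  rcases d with ⟨p, c⟩
  cases p <;> simp [NMUDefault.dual, Lit.negate_negate]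

lemma dual_image_image (D : Set (NMUDefault V)) :
    NMUDefault.dual '' (NMUDefault.dual '' D) = D := by
  rw [Set.image_image]
  simp [NMUDefault.dual_dual]

lemma negate_image_image (W : Set (Lit V)) : Lit.negate '' (Lit.negate '' W) = W := by
  rw [Set.image_image]
  simp [Lit.negate_negate]

lemma entails_dual_iff (D : Set (NMUDefault V)) (W : Set (Lit V)) (c : Lit V) :
    NMU.entails D W c ↔ NMU.entails (NMUDefault.dual '' D) (Lit.negate '' W) c.negate := by
  constructor
  · exact entails_dual D W c
  · intro h
    have h2 := entails_dual _ _ _ h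
    rwa [dual_image_image, negate_image_image, Lit.negate_negate] at h2

end DualAux

/-- The dual of an NU theory is DNU, and `S` is an outlier witness set for `L` in `Δ` iff
`¬S` is an outlier witness set for `¬L` in the dual theory. -/
theorem dual_theory_witness {V : Type} (D : Set (NMUDefault V)) (W : Set (Lit V))
    (hD : D.Finite) (hW : W.Finite) (hNU : IsNU D)
    (L S : Set (Lit V)) (hL : L ⊆ W) (hS : S ⊆ W \ L) :
    IsDNU (NMUDefault.dual '' D) ∧
      (NMUWitness D W L S ↔
        NMUWitness (NMUDefault.dual '' D) (Lit.negate '' W) (Lit.negate '' L)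
          (Lit.negate '' S)) := by
  classical
  constructor
  · rintro _ ⟨d, hd, rfl⟩ p hp
    have hp' : p ∈ Option.map Lit.negate d.pre := hp
    rcases hpre : d.pre with _ | q
    · rw [hpre] at hp'; simp at hp'
    · rw [hpre] at hp'
      simp at hp'
      subst hp'
      have := hNU d hd q (by rw [hpre]; rfl)
      simp [Lit.negate, this]
  · have himg : ∀ (A B : Set (Lit V)),
        Lit.negate '' A \ Lit.negate '' B = Lit.negate '' (A \ B) := fun A B =>
      (Set.image_diff Lit.negate_injective A B).symm
    unfold NMUWitness
    apply and_congr
    · exact (Set.image_nonempty).symm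
    apply and_congr
    · rw [himg W L]
      exact (Set.image_subset_image_iff Lit.negate_injective).symm
    have hent : ∀ (U : Set (Lit V)),
        ((∀ l ∈ S, NMU.entails D U l.negate) ↔
          (∀ l ∈ Lit.negate '' S,
            NMU.entails (NMUDefault.dual '' D) (Lit.negate '' U) l.negate)) := by
      intro U
      rw [Set.forall_mem_image]
      exact forall₂_congr fun m _ => entails_dual_iff D U m.negate
    apply and_congr
    · rw [himg W S]
      exact hent (W \ S)
    · rw [← Set.image_union, himg W (S ∪ L)]
      exact not_congr (hent (W \ (S ∪ L)))
end
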